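/- Derivability of the rule ~I⁻ for the defining formula: writing N(A) := (A ∧ (A → (A ⤙ A))) ∨ ((A → A) ⤙ A), for every formula A and all sets of assumptions Γ and counter-assumptions Δ, if (Γ;Δ) ⊢⁺ A then (Γ;Δ) ⊢⁻ N(A). -/

import Mathlib

/-- Formulas of Wansing's bi-intuitionistic logic 2Int. -/
inductive TwoInt : Type
  | atom  : ℕ → TwoInt
  | top   : TwoInt
  | bot   : TwoInt
  | and   : TwoInt → TwoInt → TwoInt
  | or    : TwoInt → TwoInt → TwoInt
  | imp   : TwoInt → TwoInt → TwoInt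
  | coimp : TwoInt → TwoInt → TwoInt

open TwoInt

mutual
/-- Proofs in 2Int: `ProvesP Γ Δ A` means `(Γ;Δ) ⊢⁺ A`. -/
inductive ProvesP : Set TwoInt → Set TwoInt → TwoInt → Prop
  | assum {Γ Δ A} : A ∈ Γ → ProvesP Γ Δ A
  | topI {Γ Δ} : ProvesP Γ Δ top
  | botE_p {Γ Δ A} : ProvesP Γ Δ bot → ProvesP Γ Δ A
  | topE_p {Γ Δ A} : ProvesD Γ Δ top → ProvesP Γ Δ A
  | andI_p {Γ Δ A B} : ProvesP Γ Δ A → ProvesP Γ Δ B → ProvesP Γ Δ (and A B)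
  | andE1_p {Γ Δ A B} : ProvesP Γ Δ (and A B) → ProvesP Γ Δ A
  | andE2_p {Γ Δ A B} : ProvesP Γ Δ (and A B) → ProvesP Γ Δ B
  | orI1_p {Γ Δ A B} : ProvesP Γ Δ A → ProvesP Γ Δ (or A B)
  | orI2_p {Γ Δ A B} : ProvesP Γ Δ B → ProvesP Γ Δ (or A B)
  | orE_p {Γ Δ A B C} : ProvesP Γ Δ (or A B) → ProvesP (Γ ∪ {A}) Δ C →
      ProvesP (Γ ∪ {B}) Δ C → ProvesP Γ Δ C
  | andE_p {Γ Δ A B C} : ProvesD Γ Δ (and A B) → ProvesP Γ (Δ ∪ {A}) C →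
      ProvesP Γ (Δ ∪ {B}) C → ProvesP Γ Δ C
  | impI_p {Γ Δ A B} : ProvesP (Γ ∪ {A}) Δ B → ProvesP Γ Δ (imp A B)
  | impE_p {Γ Δ A B} : ProvesP Γ Δ (imp A B) → ProvesP Γ Δ A → ProvesP Γ Δ B
  | impE1_m {Γ Δ A B} : ProvesD Γ Δ (imp A B) → ProvesP Γ Δ A
  | coimpI_p {Γ Δ A B} : ProvesP Γ Δ A → ProvesD Γ Δ B → ProvesP Γ Δ (coimp A B)
  | coimpE1_p {Γ Δ A B} : ProvesP Γ Δ (coimp A B) → ProvesP Γ Δ A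

/-- Dual proofs in 2Int: `ProvesD Γ Δ A` means `(Γ;Δ) ⊢⁻ A`. -/
inductive ProvesD : Set TwoInt → Set TwoInt → TwoInt → Prop
  | cassum {Γ Δ A} : A ∈ Δ → ProvesD Γ Δ A
  | botI {Γ Δ} : ProvesD Γ Δ bot
  | botE_m {Γ Δ A} : ProvesP Γ Δ bot → ProvesD Γ Δ A
  | topE_m {Γ Δ A} : ProvesD Γ Δ top → ProvesD Γ Δ A
  | andI1_m {Γ Δ A B} : ProvesD Γ Δ A → ProvesD Γ Δ (and A B)
  | andI2_m {Γ Δ A B} : ProvesD Γ Δ B → ProvesD Γ Δ (and A B)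
  | andE_m {Γ Δ A B C} : ProvesD Γ Δ (and A B) → ProvesD Γ (Δ ∪ {A}) C →
      ProvesD Γ (Δ ∪ {B}) C → ProvesD Γ Δ C
  | orE_m {Γ Δ A B C} : ProvesP Γ Δ (or A B) → ProvesD (Γ ∪ {A}) Δ C →
      ProvesD (Γ ∪ {B}) Δ C → ProvesD Γ Δ C
  | orI_m {Γ Δ A B} : ProvesD Γ Δ A → ProvesD Γ Δ B → ProvesD Γ Δ (or A B)
  | orE1_m {Γ Δ A B} : ProvesD Γ Δ (or A B) → ProvesD Γ Δ A
  | orE2_m {Γ Δ A B} : ProvesD Γ Δ (or A B) → ProvesD Γ Δ B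
  | impI_m {Γ Δ A B} : ProvesP Γ Δ A → ProvesD Γ Δ B → ProvesD Γ Δ (imp A B)
  | impE2_m {Γ Δ A B} : ProvesD Γ Δ (imp A B) → ProvesD Γ Δ B
  | coimpE2_p {Γ Δ A B} : ProvesP Γ Δ (coimp A B) → ProvesD Γ Δ B
  | coimpI_m {Γ Δ A B} : ProvesD Γ (Δ ∪ {B}) A → ProvesD Γ Δ (coimp A B)
  | coimpE_m {Γ Δ A B} : ProvesD Γ Δ (coimp A B) → ProvesD Γ Δ B → ProvesD Γ Δ A
end

/-- The defining formula `N(A) := (A ∧ (A → (A ⤙ A))) ∨ ((A → A) ⤙ A)` for strong negation. -/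
def strongNeg (A : TwoInt) : TwoInt :=
  or (and A (imp A (coimp A A))) (coimp (imp A A) A)

open Set in
mutual
theorem ProvesP.mono {Γ Γ' Δ Δ' : Set TwoInt} {A : TwoInt} (h : ProvesP Γ Δ A)
    (hΓ : Γ ⊆ Γ') (hΔ : Δ ⊆ Δ') : ProvesP Γ' Δ' A :=
  match h with
  | .assum hA => .assum (hΓ hA)
  | .topI => .topI
  | .botE_p h => .botE_p (h.mono hΓ hΔ)
  | .topE_p h => .topE_p (h.mono hΓ hΔ)
  | .andI_p h₁ h₂ => .andI_p (h₁.mono hΓ hΔ) (h₂.mono hΓ hΔ)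
  | .andE1_p h => .andE1_p (h.mono hΓ hΔ)
  | .andE2_p h => .andE2_p (h.mono hΓ hΔ)
  | .orI1_p h => .orI1_p (h.mono hΓ hΔ)
  | .orI2_p h => .orI2_p (h.mono hΓ hΔ)
  | .orE_p h h₁ h₂ => .orE_p (h.mono hΓ hΔ)
      (h₁.mono (union_subset_union_left _ hΓ) hΔ) (h₂.mono (union_subset_union_left _ hΓ) hΔ)
  | .andE_p h h₁ h₂ => .andE_p (h.mono hΓ hΔ)
      (h₁.mono hΓ (union_subset_union_left _ hΔ)) (h₂.mono hΓ (union_subset_union_left _ hΔ))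
  | .impI_p h => .impI_p (h.mono (union_subset_union_left _ hΓ) hΔ)
  | .impE_p h₁ h₂ => .impE_p (h₁.mono hΓ hΔ) (h₂.mono hΓ hΔ)
  | .impE1_m h => .impE1_m (h.mono hΓ hΔ)
  | .coimpI_p h₁ h₂ => .coimpI_p (h₁.mono hΓ hΔ) (h₂.mono hΓ hΔ)
  | .coimpE1_p h => .coimpE1_p (h.mono hΓ hΔ)

theorem ProvesD.mono {Γ Γ' Δ Δ' : Set TwoInt} {A : TwoInt} (h : ProvesD Γ Δ A)
    (hΓ : Γ ⊆ Γ') (hΔ : Δ ⊆ Δ') : ProvesD Γ' Δ' A :=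
  match h with
  | .cassum hA => .cassum (hΔ hA)
  | .botI => .botI
  | .botE_m h => .botE_m (h.mono hΓ hΔ)
  | .topE_m h => .topE_m (h.mono hΓ hΔ)
  | .andI1_m h => .andI1_m (h.mono hΓ hΔ)
  | .andI2_m h => .andI2_m (h.mono hΓ hΔ)
  | .andE_m h h₁ h₂ => .andE_m (h.mono hΓ hΔ)
      (h₁.mono hΓ (union_subset_union_left _ hΔ)) (h₂.mono hΓ (union_subset_union_left _ hΔ))
  | .orE_m h h₁ h₂ => .orE_m (h.mono hΓ hΔ)
      (h₁.mono (union_subset_union_left _ hΓ) hΔ) (h₂.mono (union_subset_union_left _ hΓ) hΔ)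
  | .orI_m h₁ h₂ => .orI_m (h₁.mono hΓ hΔ) (h₂.mono hΓ hΔ)
  | .orE1_m h => .orE1_m (h.mono hΓ hΔ)
  | .orE2_m h => .orE2_m (h.mono hΓ hΔ)
  | .impI_m h₁ h₂ => .impI_m (h₁.mono hΓ hΔ) (h₂.mono hΓ hΔ)
  | .impE2_m h => .impE2_m (h.mono hΓ hΔ)
  | .coimpE2_p h => .coimpE2_p (h.mono hΓ hΔ)
  | .coimpI_m h => .coimpI_m (h.mono hΓ (union_subset_union_left _ hΔ))
  | .coimpE_m h₁ h₂ => .coimpE_m (h₁.mono hΓ hΔ) (h₂.mono hΓ hΔ)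
end

theorem strongNeg_introD (A : TwoInt) (Γ Δ : Set TwoInt)
    (h : ProvesP Γ Δ A) : ProvesD Γ Δ (strongNeg A) := by
  have hA' : ProvesP Γ (Δ ∪ {A}) A := h.mono subset_rfl Set.subset_union_left
  exact .orI_m (.andI2_m (.impI_m h (.coimpI_m (.cassum (Or.inr rfl)))))
    (.coimpI_m (.impI_m hA' (.cassum (Or.inr rfl))))
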